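/- arXiv:1906.01209 — 2 statements merged into one kernel-verified Lean document; each statement's English description precedes it below -/
import Mathlib

section
/- There exists a constant C > 0 such that for every integer k ≥ 1 and every t ∈ [0,1], the tail of the trigonometric basis satisfies ∑_{l=k+1}^∞ ( E_l(t)² + ∫₀ᵗ E_l(τ)² dτ ) ≤ C/k. -/
open Real intervalIntegral

/-- The trigonometric basis of `L²([0,1])`: `e 1 = 1`, `e (2j) = √2 sin(2πj·)`,
`e (2j+1) = √2 cos(2πj·)` for `j ≥ 1`. -/
noncomputable def trigBasis (l : ℕ) (t : ℝ) : ℝ :=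
  if l = 1 then 1
  else if l % 2 = 0 then Real.sqrt 2 * Real.sin (2 * Real.pi * (l / 2 : ℕ) * t)
  else Real.sqrt 2 * Real.cos (2 * Real.pi * (l / 2 : ℕ) * t)

/-- `E_l(t) = ∫₀ᵗ e_l(s) ds`. -/
noncomputable def trigE (l : ℕ) (t : ℝ) : ℝ := ∫ s in (0:ℝ)..t, trigBasis l s

/-! For `m ≥ 2` and `j = ⌊m/2⌋`, `E_m(t)` is `√2 (1 - cos 2πjt) / 2πj` or
`√2 sin 2πjt / 2πj`, so `|E_m| ≤ 3/m` because `m ≤ 3j`. Hence the `m`-th summand is at most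
`18/m²` for `t ∈ [0,1]`, and the tail `∑_{m > k} 1/m²` is at most `1/k` by comparison with the
telescoping series `∑ (1/(m-1) - 1/m)`. -/

open Finset in
theorem summable_and_tsum_le_of_le_div_sq {f : ℕ → ℝ} {C : ℝ} {k : ℕ} (hk : k ≠ 0)
    (h0 : ∀ l, 0 ≤ f l) (hf : ∀ l, f l ≤ C / ((k + 1 + l : ℕ) : ℝ) ^ 2) :
    Summable f ∧ ∑' l, f l ≤ C / k := by
  have hC : 0 ≤ C := by
    have := (h0 0).trans (hf 0)
    rwa [le_div_iff₀ (by positivity), zero_mul] at this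
  have partial_le : ∀ n, ∑ l ∈ range n, f l ≤ C / k := fun n => calc
    ∑ l ∈ range n, f l ≤ ∑ l ∈ range n, C * (((k + 1 + l : ℕ) : ℝ) ^ 2)⁻¹ :=
      sum_le_sum fun l _ => hf l
    _ = C * ∑ i ∈ Ioc k (k + n), ((i : ℝ) ^ 2)⁻¹ := by
      rw [← mul_sum, range_eq_Ico, sum_Ico_add (fun i : ℕ => ((i : ℝ) ^ 2)⁻¹) 0 n (k + 1),
        ← Ico_add_one_add_one_eq_Ioc, zero_add, add_comm n, add_assoc, add_comm 1 n, add_assoc]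
    _ ≤ C * (k : ℝ)⁻¹ := by
      gcongr
      exact (sum_Ioc_inv_sq_le_sub hk (Nat.le_add_right k n)).trans (sub_le_self _ (by positivity))
    _ = C / k := (div_eq_mul_inv C k).symm
  exact ⟨summable_of_sum_range_le h0 partial_le, Real.tsum_le_of_sum_range_le h0 partial_le⟩

theorem abs_integral_sin_mul_le {c : ℝ} (hc : c ≠ 0) (t : ℝ) :
    |∫ s in (0:ℝ)..t, sin (c * s)| ≤ 2 / |c| := by
  rw [integral_comp_mul_left (fun x => sin x) hc, integral_sin, smul_eq_mul, abs_mul, abs_inv,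
    ← div_eq_inv_mul]
  gcongr
  exact (abs_sub _ _).trans (by linarith [abs_cos_le_one (c * 0), abs_cos_le_one (c * t)])

theorem abs_integral_cos_mul_le {c : ℝ} (hc : c ≠ 0) (t : ℝ) :
    |∫ s in (0:ℝ)..t, cos (c * s)| ≤ 2 / |c| := by
  rw [integral_comp_mul_left (fun x => cos x) hc, integral_cos, smul_eq_mul, abs_mul, abs_inv,
    ← div_eq_inv_mul]
  gcongr
  exact (abs_sub _ _).trans (by linarith [abs_sin_le_one (c * 0), abs_sin_le_one (c * t)])

theorem abs_trigE_le {m : ℕ} (hm : 2 ≤ m) (t : ℝ) : |trigE m t| ≤ 3 / m := by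
  set c := 2 * π * ((m / 2 : ℕ) : ℝ) with hc_def
  have hj : (1 : ℝ) ≤ (m / 2 : ℕ) := by exact_mod_cast Nat.le_div_iff_mul_le two_pos |>.mpr hm
  have hc : 0 < c := by positivity
  have hbound : √2 * (2 / |c|) ≤ 3 / m := by
    have hm3 : (m : ℝ) ≤ 3 * (m / 2 : ℕ) := by exact_mod_cast (by omega : m ≤ 3 * (m / 2))
    have hsqrt : √2 < 2 := by rw [sqrt_lt' two_pos]; norm_num
    rw [abs_of_pos hc, hc_def, ← mul_div_assoc, div_le_div_iff₀ hc (by positivity)]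
    nlinarith [sqrt_nonneg 2, pi_gt_three]
  have hne : m ≠ 1 := by omega
  refine hbound.trans' ?_
  unfold trigE trigBasis
  simp only [if_neg hne]
  split_ifs <;> rw [integral_const_mul, abs_mul, abs_of_nonneg (sqrt_nonneg 2)] <;> gcongr
  exacts [abs_integral_sin_mul_le hc.ne' t, abs_integral_cos_mul_le hc.ne' t]

theorem trigE_sq_add_integral_nonneg (m : ℕ) {t : ℝ} (ht : 0 ≤ t) :
    0 ≤ trigE m t ^ 2 + ∫ τ in (0:ℝ)..t, trigE m τ ^ 2 :=
  add_nonneg (sq_nonneg _) (integral_nonneg ht fun _ _ => sq_nonneg _)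

theorem trigE_sq_add_integral_le {m : ℕ} (hm : 2 ≤ m) {t : ℝ} (ht : t ∈ Set.Icc (0:ℝ) 1) :
    trigE m t ^ 2 + ∫ τ in (0:ℝ)..t, trigE m τ ^ 2 ≤ 18 / (m : ℝ) ^ 2 := by
  have hsq : ∀ τ, trigE m τ ^ 2 ≤ 9 / (m : ℝ) ^ 2 := fun τ => by
    rw [← sq_abs, show (9 : ℝ) / (m : ℝ) ^ 2 = (3 / m) ^ 2 by ring]
    exact pow_le_pow_left₀ (abs_nonneg _) (abs_trigE_le hm τ) 2
  have hint : ∫ τ in (0:ℝ)..t, trigE m τ ^ 2 ≤ 9 / (m : ℝ) ^ 2 := calc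
    _ ≤ ‖∫ τ in (0:ℝ)..t, trigE m τ ^ 2‖ := le_abs_self _
    _ ≤ 9 / (m : ℝ) ^ 2 * |t - 0| :=
      norm_integral_le_of_norm_le_const fun τ _ => by
        rw [Real.norm_of_nonneg (sq_nonneg _)]; exact hsq τ
    _ ≤ 9 / (m : ℝ) ^ 2 := by
      rw [sub_zero, abs_of_nonneg ht.1]
      exact mul_le_of_le_one_right (by positivity) ht.2
  exact (add_le_add (hsq t) hint).trans_eq (by ring)

theorem trig_tail_bound :
    ∃ C > (0:ℝ), ∀ k : ℕ, 1 ≤ k → ∀ t ∈ Set.Icc (0:ℝ) 1,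
      Summable (fun l : ℕ =>
        trigE (k + 1 + l) t ^ 2 + ∫ τ in (0:ℝ)..t, trigE (k + 1 + l) τ ^ 2) ∧
      (∑' l : ℕ,
        (trigE (k + 1 + l) t ^ 2 + ∫ τ in (0:ℝ)..t, trigE (k + 1 + l) τ ^ 2)) ≤ C / k :=
  ⟨18, by norm_num, fun k hk t ht =>
    summable_and_tsum_le_of_le_div_sq (by omega)
      (fun _ => trigE_sq_add_integral_nonneg _ ht.1)
      (fun _ => trigE_sq_add_integral_le (by omega) ht)⟩
end

section
/- Let b, σ, x₀ be real numbers and let (e_j)_{j ≥ 1} be a sequence of continuous real-valued functions on ℝ, with E_j(t) := ∫₀ᵗ e_j(s) ds. For a multi-index α (a finitely supported function from the positive integers to ℕ) set |α| = ∑_j α_j, α! = ∏_j (α_j!), and define x_α(t) := (x₀ · σ^{|α|} · exp(bt) / √(α!)) · ∏_j E_j(t)^{α_j} (the product being over the finitely many j with α_j > 0). Then for every multi-index α and every real t, the function x_α is differentiable at t with derivative x_α′(t) = b · x_α(t) + σ · ∑_{j : α_j ≥ 1} √(α_j) · e_j(t) · x_{α⁻(j)}(t), and x_α(0) = x₀ if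 α = 0 while x_α(0) = 0 otherwise. -/
/-!
Write `x_α(t) = c_α · exp(bt) · ∏_j E_j(t)^{α_j}` with `c_α = x₀ σ^{|α|} / √(α!)`. By the product
rule the exponential contributes `b · x_α`, and differentiating the factor `E_j^{α_j}` contributes
`c_α exp(bt) · α_j e_j E_j^{α_j - 1} ∏_{k ≠ j} E_k^{α_k}`. This is `σ √α_j e_j x_{α⁻(j)}`, because
`|α| = |α⁻(j)| + 1` and `α! = α_j · α⁻(j)!`, so that `σ √α_j c_{α⁻(j)} = α_j c_α`.
At `t = 0` every `E_j` vanishes, which kills `x_α(0)` unless `α = 0`.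
-/

open Real intervalIntegral Finsupp

/-- `E_j(t) = ∫₀ᵗ e_j(s) ds`. -/
noncomputable def antideriv (e : ℕ+ → ℝ → ℝ) (j : ℕ+) (t : ℝ) : ℝ :=
  ∫ s in (0:ℝ)..t, e j s

/-- The chaos coefficient of geometric Brownian motion:
`x_α(t) = x₀ σ^{|α|} exp(bt) / √(α!) · ∏_j E_j(t)^{α_j}`. -/
noncomputable def gbmCoef (b σ x₀ : ℝ) (e : ℕ+ → ℝ → ℝ) (α : ℕ+ →₀ ℕ) (t : ℝ) : ℝ :=
  x₀ * σ ^ (α.sum fun _ m => m) * Real.exp (b * t)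
    / Real.sqrt ((α.prod fun _ m => Nat.factorial m : ℕ) : ℝ)
    * ∏ j ∈ α.support, (antideriv e j t) ^ (α j)

namespace Finsupp

variable {ι : Type*}

theorem erase_tsub_single_one (α : ι →₀ ℕ) (j : ι) :
    (α - single j 1).erase j = α.erase j := by
  ext k
  by_cases h : k = j
  · simp [h]
  · simp [erase_ne h, single_eq_of_ne h]

@[to_additive]
theorem prod_tsub_single {M : Type*} [CommMonoid M] (α : ι →₀ ℕ) (j : ι) (g : ι → ℕ → M)
    (hg : ∀ i, g i 0 = 1) : (α - single j 1).prod g = g j (α j - 1) * (α.erase j).prod g := by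
  rw [← mul_prod_erase' _ j g hg, erase_tsub_single_one, tsub_apply, single_eq_same]

theorem sum_id_tsub_single_add_one {α : ι →₀ ℕ} {j : ι} (hj : j ∈ α.support) :
    ((α - single j 1).sum fun _ m => m) + 1 = α.sum fun _ m => m := by
  rw [sum_tsub_single _ _ _ fun _ => rfl, ← add_sum_erase _ _ _ hj]
  have := mem_support_iff.mp hj
  omega

theorem prod_factorial_eq_mul_prod_factorial_tsub_single {α : ι →₀ ℕ} {j : ι}
    (hj : j ∈ α.support) :
    (α.prod fun _ m => m.factorial) = α j * (α - single j 1).prod fun _ m => m.factorial := by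
  rw [prod_tsub_single _ _ _ fun _ => Nat.factorial_zero, ← mul_prod_erase _ _ _ hj, ← mul_assoc,
    Nat.mul_factorial_pred (mem_support_iff.mp hj)]

theorem prod_erase_eq_prod_support_erase [DecidableEq ι] {M N : Type*} [Zero M] [CommMonoid N]
    (α : ι →₀ M) (j : ι) (g : ι → M → N) :
    (α.erase j).prod g = ∏ k ∈ α.support.erase j, g k (α k) := by
  rw [Finsupp.prod, support_erase]
  exact Finset.prod_congr rfl fun k hk => by rw [erase_ne (Finset.ne_of_mem_erase hk)]

end Finsupp

theorem HasDerivAt.finsuppProd_pow {ι : Type*} {f : ι → ℝ → ℝ} {f' : ι → ℝ} {t : ℝ}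
    (hf : ∀ j, HasDerivAt (f j) (f' j) t) (α : ι →₀ ℕ) :
    HasDerivAt (fun s => α.prod fun j m => f j s ^ m)
      (∑ j ∈ α.support,
        (α j : ℝ) * f j t ^ (α j - 1) * f' j * (α.erase j).prod fun k m => f k t ^ m) t := by
  classical
  refine (HasDerivAt.fun_finsetProd fun j (_ : j ∈ α.support) => (hf j).pow (α j)).congr_deriv
    (Finset.sum_congr rfl fun j _ => ?_)
  simp only [prod_erase_eq_prod_support_erase, smul_eq_mul, Pi.pow_apply]
  ring

theorem hasDerivAt_antideriv {e : ℕ+ → ℝ → ℝ} {j : ℕ+} (he : Continuous (e j)) (t : ℝ) :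
    HasDerivAt (antideriv e j) (e j t) t :=
  integral_hasDerivAt_right (he.intervalIntegrable _ _)
    he.aestronglyMeasurable.stronglyMeasurableAtFilter he.continuousAt

theorem antideriv_zero (e : ℕ+ → ℝ → ℝ) (j : ℕ+) : antideriv e j 0 = 0 :=
  integral_same

theorem gbmCoef_eq (b σ x₀ : ℝ) (e : ℕ+ → ℝ → ℝ) (α : ℕ+ →₀ ℕ) (t : ℝ) :
    gbmCoef b σ x₀ e α t = x₀ * σ ^ (α.sum fun _ m => m) * exp (b * t)
      / √(α.prod fun _ m => m.factorial : ℕ) * α.prod fun k m => antideriv e k t ^ m :=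
  rfl

theorem gbmCoef_apply_zero (b σ x₀ : ℝ) (e : ℕ+ → ℝ → ℝ) (α : ℕ+ →₀ ℕ) :
    gbmCoef b σ x₀ e α 0 = if α = 0 then x₀ else 0 := by
  split_ifs with h
  · simp [h, gbmCoef]
  · obtain ⟨j, hj⟩ := support_nonempty_iff.mpr h
    rw [gbmCoef, Finset.prod_eq_zero hj (by rw [antideriv_zero, zero_pow (mem_support_iff.mp hj)]),
      mul_zero]

theorem mul_sqrt_mul_gbmCoef_tsub_single (b σ x₀ : ℝ) (e : ℕ+ → ℝ → ℝ) {α : ℕ+ →₀ ℕ} {j : ℕ+}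
    (hj : j ∈ α.support) (t : ℝ) :
    σ * (√(α j) * e j t * gbmCoef b σ x₀ e (α - single j 1) t) =
      x₀ * σ ^ (α.sum fun _ m => m) * exp (b * t) / √(α.prod fun _ m => m.factorial : ℕ) *
        (α j * antideriv e j t ^ (α j - 1) * e j t *
          (α.erase j).prod fun k m => antideriv e k t ^ m) := by
  have hα : (0 : ℝ) < α j := by exact_mod_cast Nat.pos_of_ne_zero (mem_support_iff.mp hj)
  rw [gbmCoef_eq, prod_tsub_single _ _ _ fun _ => pow_zero _,
    ← sum_id_tsub_single_add_one hj, prod_factorial_eq_mul_prod_factorial_tsub_single hj,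
    Nat.cast_mul, sqrt_mul hα.le, pow_succ]
  field_simp
  rw [sq_sqrt hα.le]
  ring

theorem gbm_propagator_solution (b σ x₀ : ℝ) (e : ℕ+ → ℝ → ℝ)
    (he : ∀ j, Continuous (e j)) (α : ℕ+ →₀ ℕ) (t : ℝ) :
    HasDerivAt (gbmCoef b σ x₀ e α)
      (b * gbmCoef b σ x₀ e α t +
        σ * ∑ j ∈ α.support,
          Real.sqrt (α j) * e j t * gbmCoef b σ x₀ e (α - Finsupp.single j 1) t) t ∧
    gbmCoef b σ x₀ e α 0 = if α = 0 then x₀ else 0 := by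
  refine ⟨?_, gbmCoef_apply_zero b σ x₀ e α⟩
  have hexp : HasDerivAt (fun s => exp (b * s)) (exp (b * t) * b) t :=
    (hasDerivAt_const_mul b).exp
  have hprod := HasDerivAt.finsuppProd_pow (fun j => hasDerivAt_antideriv (he j) t) α
  refine (((hexp.const_mul _).div_const _).mul hprod).congr_deriv ?_
  rw [Finset.mul_sum, Finset.mul_sum,
    Finset.sum_congr rfl fun j hj => mul_sqrt_mul_gbmCoef_tsub_single b σ x₀ e hj t, gbmCoef_eq]
  ring
end
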